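/- Fix an integer m ≥ 1. Let α_{nk} (n, k ≥ 1) be a doubly indexed family of reals (α_{nk} = log a_{nk} for an infinite matrix A of geometric real numbers), and define b_{ik} = (1/i) · (Δ^{m-1}α_{1k} − Δ^{m-1}α_{(i+1)k}), where Δ^{m-1}α_{nk} = ∑_{v=0}^{m-1} (−1)^v · binom(m-1,v) · α_{(n+v)k}. Then the following are equivalent: (I) for every bounded real sequence t, the series A_n(t) = ∑_{k=1}^∞ α_{nk} t_k converges for each n and the sequence i ↦ |(1/i) ∑_{n=1}^i Δ^m A_n(t)| is bounded; (II) (i) ∑_{k=1}^∞ |α_{nk}| < ∞ for each n, and (ii) for every bounded real sequence t, the series B_i(t) = ∑_{k=1}^∞ b_{ik} t_k converges for each i and the sequence i ↦ |B_i(t)| is bounded. (In the paper's notation: A ∈ (ℓ_∞^G, C_∞^G(Δ_G^m)) if and only if the rows of A are in ℓ_1^G and B ∈ (ℓ_∞^G, ℓ_∞^G).) -/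

import Mathlib

/-- Classical `m`-th order forward difference
`Δ^m y_k = ∑_{v=0}^m (−1)^v C(m,v) y_{k+v}`. -/
noncomputable def fdiff (m : ℕ) (y : ℕ → ℝ) (k : ℕ) : ℝ :=
  ∑ v ∈ Finset.range (m + 1), (-1 : ℝ) ^ v * (m.choose v : ℝ) * y (k + v)

/-- The associated matrix
`b_{ik} = (1/i)·(Δ^{m-1}α_{1k} − Δ^{m-1}α_{(i+1)k})`, where `Δ^{m-1}` acts on
the row index. -/
noncomputable def bmat (m : ℕ) (α : ℕ → ℕ → ℝ) (i k : ℕ) : ℝ :=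
  (1 / (i : ℝ)) *
    (fdiff (m - 1) (fun n => α n k) 1 - fdiff (m - 1) (fun n => α n k) (i + 1))

/-!
Since `Δ^m = Δ^{m-1} - Δ^{m-1} ∘ shift`, the Cesàro mean `(1/i) ∑_{n ≤ i} Δ^m A_n(t)` telescopes
to `(1/i) (Δ^{m-1} A_1(t) - Δ^{m-1} A_{i+1}(t))`, and once the row series converge this is
exactly `B_i(t)`. So the two boundedness conditions are the same, and it remains to see that the
rows converge against every bounded `t` iff they are absolutely summable: `Summable` is
unconditional, so testing against `t ≡ 1` already yields `∑ |α_{nk}| < ∞`.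
-/

open Finset

lemma fdiff_eq_neg_one_pow_mul_fwdDiff_iter (m : ℕ) (y : ℕ → ℝ) (k : ℕ) :
    fdiff m y k = (-1) ^ m * (fwdDiff 1)^[m] y k := by
  rw [fwdDiff_iter_eq_sum_shift, fdiff, mul_sum]
  refine sum_congr rfl fun v hv => ?_
  obtain ⟨w, rfl⟩ := Nat.exists_eq_add_of_le (Nat.lt_succ_iff.mp (mem_range.mp hv))
  have hsign : (-1 : ℝ) ^ (v + w) * (-1) ^ w = (-1) ^ v := by
    rw [pow_add, mul_assoc, ← pow_add, ← two_mul, pow_mul]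
    norm_num
  rw [Nat.add_sub_cancel_left, zsmul_eq_mul, smul_eq_mul, mul_one]
  push_cast
  rw [← hsign]
  ring

lemma fdiff_succ (m : ℕ) (y : ℕ → ℝ) (k : ℕ) :
    fdiff (m + 1) y k = fdiff m y k - fdiff m y (k + 1) := by
  simp only [fdiff_eq_neg_one_pow_mul_fwdDiff_iter, Function.iterate_succ_apply', fwdDiff]
  ring

lemma sum_Icc_fdiff_succ (m i : ℕ) (y : ℕ → ℝ) :
    ∑ n ∈ Icc 1 i, fdiff (m + 1) y n = fdiff m y 1 - fdiff m y (i + 1) := by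
  induction i with
  | zero => simp
  | succ i ih =>
    rw [sum_Icc_succ_top (by omega), ih, fdiff_succ]
    ring

lemma fdiff_mul_const (m : ℕ) (y : ℕ → ℝ) (c : ℝ) (k : ℕ) :
    fdiff m (fun n => y n * c) k = fdiff m y k * c := by
  simp only [fdiff, sum_mul, mul_assoc]

lemma hasSum_fdiff {y : ℕ → ℕ → ℝ} {s : ℕ → ℝ} (m : ℕ) {j : ℕ}
    (h : ∀ n, j ≤ n → HasSum (y n) (s n)) :
    HasSum (fun k => fdiff m (fun n => y n k) j) (fdiff m s j) :=
  hasSum_sum fun v _ => (h (j + v) (Nat.le_add_right j v)).mul_left _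

lemma hasSum_bmat_succ_mul (m : ℕ) (α : ℕ → ℕ → ℝ) (t : ℕ → ℝ)
    (hs : ∀ n, 1 ≤ n → Summable fun k => α n (k + 1) * t (k + 1)) (i : ℕ) :
    HasSum (fun k => bmat (m + 1) α i (k + 1) * t (k + 1))
      ((1 / (i : ℝ)) *
        ∑ n ∈ Icc 1 i, fdiff (m + 1) (fun j => ∑' k, α j (k + 1) * t (k + 1)) n) := by
  have hrow (j : ℕ) (hj : 1 ≤ j) :=
    hasSum_fdiff m (j := j) fun n hn => (hs n (hj.trans hn)).hasSum
  rw [sum_Icc_fdiff_succ]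
  refine (((hrow 1 le_rfl).sub (hrow (i + 1) (Nat.le_add_left 1 i))).mul_left _).congr_fun
    fun k => ?_
  simp only [bmat, Nat.add_sub_cancel, fdiff_mul_const]
  ring

lemma Summable.mul_of_norm_bounded {ι R : Type*} [NormedRing R] [CompleteSpace R] {f t : ι → R}
    {C : ℝ} (hf : Summable fun k => ‖f k‖) (ht : ∀ k, ‖t k‖ ≤ C) :
    Summable fun k => f k * t k :=
  .of_norm_bounded (hf.mul_right C) fun k =>
    (norm_mul_le _ _).trans (mul_le_mul_of_nonneg_left (ht k) (norm_nonneg _))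

/-- `A ∈ (ℓ_∞^G, C_∞^G(Δ_G^m))` iff the rows of `A` are in
`ℓ_1^G` and `B ∈ (ℓ_∞^G, ℓ_∞^G)`, stated after taking logarithms
(`α_{nk} = log a_{nk}`, `t_k = log x_k`). -/
theorem matrix_linf_to_CinfG (m : ℕ) (hm : 1 ≤ m) (α : ℕ → ℕ → ℝ) :
    (∀ t : ℕ → ℝ, (∃ C : ℝ, ∀ k, |t k| ≤ C) →
        (∀ n, 1 ≤ n → Summable (fun k : ℕ => α n (k + 1) * t (k + 1))) ∧
        ∃ M : ℝ, ∀ i : ℕ,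
          |(1 / (i : ℝ)) * ∑ n ∈ Finset.Icc 1 i,
              fdiff m (fun j => ∑' k : ℕ, α j (k + 1) * t (k + 1)) n| ≤ M) ↔
      ((∀ n, 1 ≤ n → Summable (fun k : ℕ => |α n (k + 1)|)) ∧
        ∀ t : ℕ → ℝ, (∃ C : ℝ, ∀ k, |t k| ≤ C) →
          (∀ i, 1 ≤ i → Summable (fun k : ℕ => bmat m α i (k + 1) * t (k + 1))) ∧
          ∃ M : ℝ, ∀ i : ℕ,
            |∑' k : ℕ, bmat m α (i + 1) (k + 1) * t (k + 1)| ≤ M) := by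
  obtain ⟨m, rfl⟩ : ∃ m', m = m' + 1 := ⟨m - 1, by omega⟩
  constructor
  · intro H
    have hrows (n : ℕ) (hn : 1 ≤ n) : Summable fun k => |α n (k + 1)| :=
      summable_abs_iff.mpr (by simpa using (H (fun _ => 1) ⟨1, fun _ => by simp⟩).1 n hn)
    refine ⟨hrows, fun t ht => ?_⟩
    obtain ⟨hs, M, hM⟩ := H t ht
    refine ⟨fun i _ => (hasSum_bmat_succ_mul m α t hs i).summable, M, fun i => ?_⟩
    rw [(hasSum_bmat_succ_mul m α t hs (i + 1)).tsum_eq]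
    exact hM (i + 1)
  · rintro ⟨hrows, hB⟩ t ⟨C, hC⟩
    have hs (n : ℕ) (hn : 1 ≤ n) : Summable fun k => α n (k + 1) * t (k + 1) :=
      Summable.mul_of_norm_bounded (hrows n hn) fun k => hC (k + 1)
    obtain ⟨M, hM⟩ := (hB t ⟨C, hC⟩).2
    refine ⟨hs, max M 0, fun i => ?_⟩
    rcases i with _ | i
    · simp
    · rw [← (hasSum_bmat_succ_mul m α t hs (i + 1)).tsum_eq]
      exact (hM i).trans (le_max_left _ _)
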